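/- Let S be a monad on a category C with finite coproducts such that all the requisite final coalgebras S^ν X = νγ.S(X+γ) (and their iterates) exist. Define bold-η : S → S^ν by bold-η_X = out⁻¹ ∘ S(inl), ρ^ν = coit(ρ∘out) for a natural transformation ρ : S^ν → S, bold-μ_X = coit(S[id, inr∘out⁻¹] ∘ out ∘ out) : S^{νν}X → S^ν X, and the delay map ▷ = out⁻¹ ∘ η ∘ inr : S^ν → S^ν. If ρ : S^ν → S is a monad morphism satisfying ρ∘bold-η = id, ρ∘bold-μ = ρ∘ρ^ν, and the delay cancellation condition ρ∘▷ = ρ, then S, totally guarded and equipped with the iteration operator f† = ρ ∘ coit(f) (where coit(f) : X → S^ν Y is the unique coalgebra morphism from (X, f) to (S^ν Y, out)), is a complete Elgot monad. -/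

import Mathlib

/-!
The coalgebra structure `out` of `S^ν` is inverted by `out⁻¹ = μ^ν ∘ S^ν[now, ▷] ∘ boldη`.
Applying the monad morphism `ρ` and using `ρ ∘ boldη = id`, `ρ ∘ now = η` and delay
cancellation `ρ ∘ ▷ = ρ` turns this into `ρ ∘ out⁻¹ = [η, ρ]*`: `ρ` is an algebra for
`S(X + -)`, which makes `ρ ∘ coit f` a solution of `f`. Uniformity and naturality transport
`coit` along coalgebra morphisms. For the codiagonal, a coalgebra morphism `h` into `S^{νν}`
links `coit` of the flattened loop to `boldμ ∘ h` and the inner-then-outer iteration to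
`ρ^ν ∘ h`; the condition `ρ ∘ boldμ = ρ ∘ ρ^ν` identifies the two.
-/

open CategoryTheory CategoryTheory.Limits

universe v u

/-- A monad on `C`, presented as a Kleisli triple. -/
structure KMonad (C : Type u) [Category.{v} C] where
  obj : C → C
  η : ∀ X : C, X ⟶ obj X
  bind : ∀ {X Y : C}, (X ⟶ obj Y) → (obj X ⟶ obj Y)
  η_bind : ∀ {X Y : C} (f : X ⟶ obj Y), η X ≫ bind f = f
  bind_η : ∀ X : C, bind (η X) = 𝟙 (obj X)
  bind_comp : ∀ {X Y Z : C} (f : X ⟶ obj Y) (g : Y ⟶ obj Z),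
      bind (f ≫ bind g) = bind f ≫ bind g

namespace KMonad

variable {C : Type u} [Category.{v} C] (S : KMonad C)

theorem bind_comp_bind {X Y Z : C} (f : X ⟶ S.obj Y) (g : Y ⟶ S.obj Z) :
    S.bind f ≫ S.bind g = S.bind (f ≫ S.bind g) :=
  (S.bind_comp f g).symm

variable [HasBinaryCoproducts C]

/-- The final coalgebras `S^ν X = νγ. S(X + γ)`, with `tuo = out⁻¹` and coiteration `coit`. -/
structure FinalCoalgebras where
  obj : C → C
  out : ∀ X : C, obj X ⟶ S.obj (X ⨿ obj X)
  tuo : ∀ X : C, S.obj (X ⨿ obj X) ⟶ obj X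
  out_tuo : ∀ X : C, out X ≫ tuo X = 𝟙 (obj X)
  tuo_out : ∀ X : C, tuo X ≫ out X = 𝟙 (S.obj (X ⨿ obj X))
  coit : ∀ (X A : C), (A ⟶ S.obj (X ⨿ A)) → (A ⟶ obj X)
  coit_out : ∀ (X A : C) (c : A ⟶ S.obj (X ⨿ A)),
    coit X A c ≫ out X = c ≫ S.bind (coprod.map (𝟙 X) (coit X A c) ≫ S.η (X ⨿ obj X))
  eq_coit : ∀ (X A : C) (c : A ⟶ S.obj (X ⨿ A)) (h : A ⟶ obj X),
    h ≫ out X = c ≫ S.bind (coprod.map (𝟙 X) h ≫ S.η (X ⨿ obj X)) → h = coit X A c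

namespace FinalCoalgebras

variable {S} (ν : S.FinalCoalgebras)

theorem out_tuo_assoc (X : C) {W : C} (k : ν.obj X ⟶ W) : ν.out X ≫ ν.tuo X ≫ k = k := by
  rw [← Category.assoc, ν.out_tuo, Category.id_comp]

theorem tuo_out_assoc (X : C) {W : C} (k : S.obj (X ⨿ ν.obj X) ⟶ W) :
    ν.tuo X ≫ ν.out X ≫ k = k := by
  rw [← Category.assoc, ν.tuo_out, Category.id_comp]

theorem comp_coit {X A B : C} (f : A ⟶ S.obj (X ⨿ A)) (g : B ⟶ S.obj (X ⨿ B)) (h : B ⟶ A)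
    (hh : h ≫ f = g ≫ S.bind (coprod.map (𝟙 X) h ≫ S.η (X ⨿ A))) :
    h ≫ ν.coit X A f = ν.coit X B g := by
  apply ν.eq_coit
  rw [Category.assoc, ν.coit_out, reassoc_of% hh, S.bind_comp_bind, Category.assoc,
    S.η_bind, coprod.map_map_assoc, Category.comp_id]

/-- The unit of `S^ν`. -/
noncomputable def now (X : C) : X ⟶ ν.obj X := coprod.inl ≫ S.η (X ⨿ ν.obj X) ≫ ν.tuo X

/-- The delay map `▷`. -/
noncomputable def delay (X : C) : ν.obj X ⟶ ν.obj X := coprod.inr ≫ S.η (X ⨿ ν.obj X) ≫ ν.tuo X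

noncomputable def boldη (X : C) : S.obj X ⟶ ν.obj X :=
  S.bind (coprod.inl ≫ S.η (X ⨿ ν.obj X)) ≫ ν.tuo X

theorem now_comp_out (X : C) : ν.now X ≫ ν.out X = coprod.inl ≫ S.η (X ⨿ ν.obj X) := by
  simp only [now, Category.assoc, ν.tuo_out, Category.comp_id]

def IsBindLift (bindν : ∀ X Y : C, (X ⟶ ν.obj Y) → (ν.obj X ⟶ ν.obj Y)) : Prop :=
  ∀ (X Y : C) (f : X ⟶ ν.obj Y), bindν X Y f ≫ ν.out Y =
    ν.out X ≫ S.bind (coprod.desc (f ≫ ν.out Y) (bindν X Y f ≫ coprod.inr ≫ S.η (Y ⨿ ν.obj Y)))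

/-- The multiplication `boldμ : S^{νν} ⟶ S^ν` for a family `Out` of coalgebras for
`S^ν(X + -)` with inverse `Tuo`. -/
noncomputable def boldμ {Sνν : C → C} (Out : ∀ X : C, Sνν X ⟶ ν.obj (X ⨿ Sνν X))
    (Tuo : ∀ X : C, ν.obj (X ⨿ Sνν X) ⟶ Sνν X) (X : C) : Sνν X ⟶ ν.obj X :=
  ν.coit X (Sνν X) (Out X ≫ ν.out (X ⨿ Sνν X) ≫
    S.bind (coprod.desc (𝟙 (X ⨿ Sνν X)) (Tuo X ≫ coprod.inr) ≫ S.η (X ⨿ Sνν X)))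

section

variable {bindν : ∀ X Y : C, (X ⟶ ν.obj Y) → (ν.obj X ⟶ ν.obj Y)} {ρ : ∀ X : C, ν.obj X ⟶ S.obj X}

theorem boldη_comp_bindν (hbindν : ν.IsBindLift bindν) {X Y : C} (f : X ⟶ ν.obj Y) :
    ν.boldη X ≫ bindν X Y f = S.bind (f ≫ ν.out Y) ≫ ν.tuo Y := by
  calc ν.boldη X ≫ bindν X Y f = (ν.boldη X ≫ bindν X Y f ≫ ν.out Y) ≫ ν.tuo Y := by
        simp only [Category.assoc, ν.out_tuo, Category.comp_id]
    _ = S.bind (f ≫ ν.out Y) ≫ ν.tuo Y := by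
        rw [hbindν]
        simp only [boldη, Category.assoc, ν.tuo_out_assoc, S.bind_comp_bind, S.η_bind,
          coprod.inl_desc]

theorem tuo_comp_ρ (hbindν : ν.IsBindLift bindν)
    (hρη : ∀ X : C, ν.now X ≫ ρ X = S.η X)
    (hρbind : ∀ (X Y : C) (f : X ⟶ ν.obj Y), bindν X Y f ≫ ρ Y = ρ X ≫ S.bind (f ≫ ρ Y))
    (halg : ∀ X : C, ν.boldη X ≫ ρ X = 𝟙 (S.obj X))
    (hdelay : ∀ X : C, ν.delay X ≫ ρ X = ρ X) (X : C) :
    ν.tuo X ≫ ρ X = S.bind (coprod.desc (S.η X) (ρ X)) := by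
  have hstep : S.η (X ⨿ ν.obj X) ≫ ν.tuo X ≫ ρ X = coprod.desc (S.η X) (ρ X) := by
    apply coprod.hom_ext
    · rw [coprod.inl_desc]; simpa only [now, Category.assoc] using hρη X
    · rw [coprod.inr_desc]; simpa only [delay, Category.assoc] using hdelay X
  calc ν.tuo X ≫ ρ X
      = (ν.boldη (X ⨿ ν.obj X) ≫ bindν _ X (S.η _ ≫ ν.tuo X)) ≫ ρ X := by
        rw [ν.boldη_comp_bindν hbindν, Category.assoc, Category.assoc, ν.tuo_out,
          Category.comp_id, S.bind_η, Category.id_comp]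
    _ = ν.boldη (X ⨿ ν.obj X) ≫ ρ _ ≫ S.bind (S.η _ ≫ ν.tuo X ≫ ρ X) := by
        rw [Category.assoc, hρbind, Category.assoc]
    _ = S.bind (coprod.desc (S.η X) (ρ X)) := by
        rw [hstep, reassoc_of% (halg _)]

theorem coit_comp_fixpoint (hρ : ∀ X : C, ν.tuo X ≫ ρ X = S.bind (coprod.desc (S.η X) (ρ X)))
    {X Y : C} (f : X ⟶ S.obj (Y ⨿ X)) :
    ν.coit Y X f ≫ ρ Y = f ≫ S.bind (coprod.desc (S.η Y) (ν.coit Y X f ≫ ρ Y)) := by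
  conv_lhs => rw [← ν.out_tuo_assoc Y (ρ Y), hρ, reassoc_of% (ν.coit_out Y X f)]
  rw [S.bind_comp_bind, Category.assoc, S.η_bind, coprod.map_desc, Category.id_comp]

theorem coit_comp_bindν_boldη (hbindν : ν.IsBindLift bindν) {X Y Z : C}
    (f : X ⟶ S.obj (Y ⨿ X)) (g : Y ⟶ S.obj Z) :
    ν.coit Y X f ≫ bindν Y Z (g ≫ ν.boldη Z) =
      ν.coit Z X (f ≫ S.bind (coprod.desc (g ≫ S.bind (coprod.inl ≫ S.η (Z ⨿ X)))
        (coprod.inr ≫ S.η (Z ⨿ X)))) := by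
  apply ν.eq_coit
  rw [Category.assoc, hbindν, reassoc_of% (ν.coit_out Y X f)]
  simp only [boldη, Category.assoc, ν.tuo_out, Category.comp_id, S.bind_comp_bind,
    S.η_bind, coprod.map_desc, coprod.desc_comp, coprod.inl_map_assoc, coprod.inr_map_assoc,
    Category.id_comp]

theorem coit_comp_ρ_comp_bind (hbindν : ν.IsBindLift bindν)
    (hρbind : ∀ (X Y : C) (f : X ⟶ ν.obj Y), bindν X Y f ≫ ρ Y = ρ X ≫ S.bind (f ≫ ρ Y))
    (halg : ∀ X : C, ν.boldη X ≫ ρ X = 𝟙 (S.obj X))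
    {X Y Z : C} (f : X ⟶ S.obj (Y ⨿ X)) (g : Y ⟶ S.obj Z) :
    (ν.coit Y X f ≫ ρ Y) ≫ S.bind g =
      ν.coit Z X (f ≫ S.bind (coprod.desc (g ≫ S.bind (coprod.inl ≫ S.η (Z ⨿ X)))
        (coprod.inr ≫ S.η (Z ⨿ X)))) ≫ ρ Z := by
  rw [← ν.coit_comp_bindν_boldη hbindν, Category.assoc, Category.assoc, hρbind,
    Category.assoc, halg, Category.comp_id]

theorem comp_coit_Out_comp_ρ (hρη : ∀ X : C, ν.now X ≫ ρ X = S.η X)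
    (hρbind : ∀ (X Y : C) (f : X ⟶ ν.obj Y), bindν X Y f ≫ ρ Y = ρ X ≫ S.bind (f ≫ ρ Y))
    {Sνν : C → C} {Out : ∀ X : C, Sνν X ⟶ ν.obj (X ⨿ Sνν X)} {Y A : C}
    (c : A ⟶ ν.obj (Y ⨿ A)) (h : A ⟶ Sνν Y)
    (hh : h ≫ Out Y = c ≫ bindν _ _ (coprod.map (𝟙 Y) h ≫ ν.now (Y ⨿ Sνν Y))) :
    h ≫ ν.coit Y (Sνν Y) (Out Y ≫ ρ (Y ⨿ Sνν Y)) = ν.coit Y A (c ≫ ρ (Y ⨿ A)) := by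
  apply ν.comp_coit
  rw [reassoc_of% hh, hρbind, Category.assoc, Category.assoc, hρη]

theorem comp_coit_flatten (hbindν : ν.IsBindLift bindν) {Sνν : C → C}
    {Out : ∀ X : C, Sνν X ⟶ ν.obj (X ⨿ Sνν X)}
    {Tuo : ∀ X : C, ν.obj (X ⨿ Sνν X) ⟶ Sνν X} (hOT : ∀ X : C, Out X ≫ Tuo X = 𝟙 (Sνν X))
    {X Y : C} (f : X ⟶ S.obj ((Y ⨿ X) ⨿ X)) (h : X ⟶ Sνν Y)
    (hh : h ≫ Out Y =
      ν.coit (Y ⨿ X) X f ≫ bindν _ _ (coprod.map (𝟙 Y) h ≫ ν.now (Y ⨿ Sνν Y))) :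
    h ≫ ν.boldμ Out Tuo Y =
      ν.coit Y X (f ≫ S.bind (coprod.desc (𝟙 (Y ⨿ X)) coprod.inr ≫ S.η (Y ⨿ X))) := by
  apply ν.comp_coit
  rw [reassoc_of% hh, reassoc_of% (hbindν _ _ _), reassoc_of% (ν.coit_out _ _ f)]
  simp only [Category.assoc, ν.now_comp_out, S.bind_comp_bind, S.η_bind, coprod.map_desc,
    coprod.desc_comp, coprod.inl_desc, coprod.inr_desc, coprod.inr_map_assoc, Category.id_comp]
  rw [← reassoc_of% hh, reassoc_of% (hOT Y)]

theorem coit_codiagonal_comp_ρ (hbindν : ν.IsBindLift bindν)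
    (hρη : ∀ X : C, ν.now X ≫ ρ X = S.η X)
    (hρbind : ∀ (X Y : C) (f : X ⟶ ν.obj Y), bindν X Y f ≫ ρ Y = ρ X ≫ S.bind (f ≫ ρ Y))
    {Sνν : C → C} {Out : ∀ X : C, Sνν X ⟶ ν.obj (X ⨿ Sνν X)}
    {Tuo : ∀ X : C, ν.obj (X ⨿ Sνν X) ⟶ Sνν X} (hOT : ∀ X : C, Out X ≫ Tuo X = 𝟙 (Sνν X))
    (hOut : ∀ (X A : C) (c : A ⟶ ν.obj (X ⨿ A)), ∃ h : A ⟶ Sνν X,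
      h ≫ Out X = c ≫ bindν (X ⨿ A) (X ⨿ Sνν X) (coprod.map (𝟙 X) h ≫ ν.now (X ⨿ Sνν X)))
    (halg : ∀ X : C,
      ν.boldμ Out Tuo X ≫ ρ X = ν.coit X (Sνν X) (Out X ≫ ρ (X ⨿ Sνν X)) ≫ ρ X)
    {X Y : C} (f : X ⟶ S.obj ((Y ⨿ X) ⨿ X)) :
    ν.coit Y X (f ≫ S.bind (coprod.desc (𝟙 (Y ⨿ X)) coprod.inr ≫ S.η (Y ⨿ X))) ≫ ρ Y =
      ν.coit Y X (ν.coit (Y ⨿ X) X f ≫ ρ (Y ⨿ X)) ≫ ρ Y := by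
  obtain ⟨h, hh⟩ := hOut Y X (ν.coit (Y ⨿ X) X f)
  rw [← ν.comp_coit_flatten hbindν hOT f h hh, ← ν.comp_coit_Out_comp_ρ hρη hρbind _ h hh,
    Category.assoc, Category.assoc, halg]

end

end FinalCoalgebras

end KMonad

theorem nu_algebra_with_delay_cancellation_is_Elgot_general {C : Type u} [Category.{v} C]
    [HasBinaryCoproducts C] (S : KMonad C)
    -- the final coalgebras `S^ν X = νγ. S(X + γ)`, with structure maps `out`
    -- (isomorphisms, with inverse `tuo`) and coiteration `coit`:
    (Sν : C → C) (out : ∀ X : C, Sν X ⟶ S.obj (X ⨿ Sν X))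
    (tuo : ∀ X : C, S.obj (X ⨿ Sν X) ⟶ Sν X)
    (hot : ∀ X : C, out X ≫ tuo X = 𝟙 (Sν X))
    (hto : ∀ X : C, tuo X ≫ out X = 𝟙 (S.obj (X ⨿ Sν X)))
    (coit : ∀ (X A : C), (A ⟶ S.obj (X ⨿ A)) → (A ⟶ Sν X))
    (hcoit : ∀ (X A : C) (c : A ⟶ S.obj (X ⨿ A)),
      coit X A c ≫ out X = c ≫ S.bind (coprod.map (𝟙 X) (coit X A c) ≫ S.η (X ⨿ Sν X)))
    (hcoit_unique : ∀ (X A : C) (c : A ⟶ S.obj (X ⨿ A)) (h : A ⟶ Sν X),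
      h ≫ out X = c ≫ S.bind (coprod.map (𝟙 X) h ≫ S.η (X ⨿ Sν X)) → h = coit X A c)
    -- the Kleisli lifting of the monad `S^ν`, coinductively characterized:
    (bindν : ∀ (X Y : C), (X ⟶ Sν Y) → (Sν X ⟶ Sν Y))
    (hbindν : ∀ (X Y : C) (f : X ⟶ Sν Y),
      bindν X Y f ≫ out Y =
        out X ≫ S.bind (coprod.desc (f ≫ out Y)
          (bindν X Y f ≫ coprod.inr ≫ S.η (Y ⨿ Sν Y))))
    -- the second iterate `S^{νν} X = νγ. S^ν(X + γ)`, with invertible structure maps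
    -- and finality (w.r.t. the functorial action of `S^ν` given by coiteration):
    (Sνν : C → C) (Out : ∀ X : C, Sνν X ⟶ Sν (X ⨿ Sνν X))
    (Tuo : ∀ X : C, Sν (X ⨿ Sνν X) ⟶ Sνν X)
    (hOT : ∀ X : C, Out X ≫ Tuo X = 𝟙 (Sνν X))
    (hOutFinal : ∀ (X A : C) (c : A ⟶ Sν (X ⨿ A)),
      ∃! h : A ⟶ Sνν X,
        h ≫ Out X = c ≫ bindν (X ⨿ A) (X ⨿ Sνν X)
          (coprod.map (𝟙 X) h ≫ coprod.inl ≫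
            S.η ((X ⨿ Sνν X) ⨿ Sν (X ⨿ Sνν X)) ≫ tuo (X ⨿ Sνν X)))
    -- `ρ : S^ν ⟶ S` is a monad morphism (w.r.t. the unit `out⁻¹ ∘ η ∘ inl` of `S^ν`):
    (ρ : ∀ X : C, Sν X ⟶ S.obj X)
    (hρη : ∀ X : C, (coprod.inl ≫ S.η (X ⨿ Sν X) ≫ tuo X) ≫ ρ X = S.η X)
    (hρbind : ∀ (X Y : C) (f : X ⟶ Sν Y),
      bindν X Y f ≫ ρ Y = ρ X ≫ S.bind (f ≫ ρ Y))
    -- `ρ ∘ boldη = id`, where `boldη = out⁻¹ ∘ S(inl) : S ⟶ S^ν`: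
    (halg₁ : ∀ X : C,
      (S.bind (coprod.inl ≫ S.η (X ⨿ Sν X)) ≫ tuo X) ≫ ρ X = 𝟙 (S.obj X))
    -- `ρ ∘ boldμ = ρ ∘ ρ^ν`, where `boldμ = coit(S[id, inr ∘ Out⁻¹] ∘ out ∘ out)`
    -- and `ρ^ν = coit(ρ ∘ Out)`:
    (halg₂ : ∀ X : C,
      coit X (Sνν X)
          (Out X ≫ out (X ⨿ Sνν X) ≫
            S.bind ((coprod.desc (𝟙 (X ⨿ Sνν X)) (Tuo X ≫ coprod.inr)) ≫
              S.η (X ⨿ Sνν X))) ≫ ρ X =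
        coit X (Sνν X) (Out X ≫ ρ (X ⨿ Sνν X)) ≫ ρ X)
    -- delay cancellation `ρ ∘ ▷ = ρ`, where `▷ = out⁻¹ ∘ η ∘ inr`:
    (hdelay : ∀ X : C, (coprod.inr ≫ S.η (X ⨿ Sν X) ≫ tuo X) ≫ ρ X = ρ X) :
    -- then `S`, totally guarded with iteration `f† = ρ ∘ coit f`, is a complete
    -- Elgot monad:
    -- fixpoint identity:
    (∀ (X Y : C) (f : X ⟶ S.obj (Y ⨿ X)),
      coit Y X f ≫ ρ Y = f ≫ S.bind (coprod.desc (S.η Y) (coit Y X f ≫ ρ Y))) ∧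
    -- naturality:
    (∀ (X Y Z : C) (f : X ⟶ S.obj (Y ⨿ X)) (g : Y ⟶ S.obj Z),
      (coit Y X f ≫ ρ Y) ≫ S.bind g =
        coit Z X (f ≫ S.bind (coprod.desc (g ≫ S.bind (coprod.inl ≫ S.η (Z ⨿ X)))
          (coprod.inr ≫ S.η (Z ⨿ X)))) ≫ ρ Z) ∧
    -- codiagonal:
    (∀ (X Y : C) (f : X ⟶ S.obj ((Y ⨿ X) ⨿ X)),
      coit Y X (f ≫ S.bind (coprod.desc (𝟙 (Y ⨿ X)) coprod.inr ≫ S.η (Y ⨿ X))) ≫ ρ Y =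
        coit Y X (coit (Y ⨿ X) X f ≫ ρ (Y ⨿ X)) ≫ ρ Y) ∧
    -- uniformity:
    (∀ (X Y Z : C) (f : X ⟶ S.obj (Y ⨿ X)) (g : Z ⟶ S.obj (Y ⨿ Z)) (h : Z ⟶ X),
      h ≫ f = g ≫ S.bind (coprod.map (𝟙 Y) h ≫ S.η (Y ⨿ X)) →
      h ≫ coit Y X f ≫ ρ Y = coit Y Z g ≫ ρ Y) := by
  let ν : S.FinalCoalgebras := ⟨Sν, out, tuo, hot, hto, coit, hcoit, hcoit_unique⟩
  have hρ := ν.tuo_comp_ρ hbindν hρη hρbind halg₁ hdelay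
  exact ⟨fun _ _ f => ν.coit_comp_fixpoint hρ f,
    fun _ _ _ f g => ν.coit_comp_ρ_comp_bind hbindν hρbind halg₁ f g,
    fun _ _ f => ν.coit_codiagonal_comp_ρ hbindν hρη hρbind hOT
      (fun X A c => (hOutFinal X A c).exists) halg₂ f,
    fun _ Y _ f g h hh => (reassoc_of% (ν.comp_coit f g h hh)) (ρ Y)⟩

theorem nu_algebra_with_delay_cancellation_is_Elgot {C : Type u} [Category.{v} C]
    [HasBinaryCoproducts C] (S : KMonad C)
    -- the final coalgebras `S^ν X = νγ. S(X + γ)`, with structure maps `out`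
    -- (isomorphisms, with inverse `tuo`) and coiteration `coit`:
    (Sν : C → C) (out : ∀ X : C, Sν X ⟶ S.obj (X ⨿ Sν X))
    (tuo : ∀ X : C, S.obj (X ⨿ Sν X) ⟶ Sν X)
    (hot : ∀ X : C, out X ≫ tuo X = 𝟙 (Sν X))
    (hto : ∀ X : C, tuo X ≫ out X = 𝟙 (S.obj (X ⨿ Sν X)))
    (coit : ∀ (X A : C), (A ⟶ S.obj (X ⨿ A)) → (A ⟶ Sν X))
    (hcoit : ∀ (X A : C) (c : A ⟶ S.obj (X ⨿ A)),
      coit X A c ≫ out X = c ≫ S.bind (coprod.map (𝟙 X) (coit X A c) ≫ S.η (X ⨿ Sν X)))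
    (hcoit_unique : ∀ (X A : C) (c : A ⟶ S.obj (X ⨿ A)) (h : A ⟶ Sν X),
      h ≫ out X = c ≫ S.bind (coprod.map (𝟙 X) h ≫ S.η (X ⨿ Sν X)) → h = coit X A c)
    -- the Kleisli lifting of the monad `S^ν`, coinductively characterized:
    (bindν : ∀ (X Y : C), (X ⟶ Sν Y) → (Sν X ⟶ Sν Y))
    (hbindν : ∀ (X Y : C) (f : X ⟶ Sν Y),
      bindν X Y f ≫ out Y =
        out X ≫ S.bind (coprod.desc (f ≫ out Y)
          (bindν X Y f ≫ coprod.inr ≫ S.η (Y ⨿ Sν Y))))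
    -- the second iterate `S^{νν} X = νγ. S^ν(X + γ)`, with invertible structure maps
    -- and finality (w.r.t. the functorial action of `S^ν` given by coiteration):
    (Sνν : C → C) (Out : ∀ X : C, Sνν X ⟶ Sν (X ⨿ Sνν X))
    (Tuo : ∀ X : C, Sν (X ⨿ Sνν X) ⟶ Sνν X)
    (hOT : ∀ X : C, Out X ≫ Tuo X = 𝟙 (Sνν X))
    (hTO : ∀ X : C, Tuo X ≫ Out X = 𝟙 (Sν (X ⨿ Sνν X)))
    (hOutFinal : ∀ (X A : C) (c : A ⟶ Sν (X ⨿ A)),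
      ∃! h : A ⟶ Sνν X,
        h ≫ Out X = c ≫ bindν (X ⨿ A) (X ⨿ Sνν X)
          (coprod.map (𝟙 X) h ≫ coprod.inl ≫
            S.η ((X ⨿ Sνν X) ⨿ Sν (X ⨿ Sνν X)) ≫ tuo (X ⨿ Sνν X)))
    -- `ρ : S^ν ⟶ S` is a monad morphism (w.r.t. the unit `out⁻¹ ∘ η ∘ inl` of `S^ν`):
    (ρ : ∀ X : C, Sν X ⟶ S.obj X)
    (hρη : ∀ X : C, (coprod.inl ≫ S.η (X ⨿ Sν X) ≫ tuo X) ≫ ρ X = S.η X)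
    (hρbind : ∀ (X Y : C) (f : X ⟶ Sν Y),
      bindν X Y f ≫ ρ Y = ρ X ≫ S.bind (f ≫ ρ Y))
    -- `ρ ∘ boldη = id`, where `boldη = out⁻¹ ∘ S(inl) : S ⟶ S^ν`:
    (halg₁ : ∀ X : C,
      (S.bind (coprod.inl ≫ S.η (X ⨿ Sν X)) ≫ tuo X) ≫ ρ X = 𝟙 (S.obj X))
    -- `ρ ∘ boldμ = ρ ∘ ρ^ν`, where `boldμ = coit(S[id, inr ∘ Out⁻¹] ∘ out ∘ out)`
    -- and `ρ^ν = coit(ρ ∘ Out)`: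
    (halg₂ : ∀ X : C,
      coit X (Sνν X)
          (Out X ≫ out (X ⨿ Sνν X) ≫
            S.bind ((coprod.desc (𝟙 (X ⨿ Sνν X)) (Tuo X ≫ coprod.inr)) ≫
              S.η (X ⨿ Sνν X))) ≫ ρ X =
        coit X (Sνν X) (Out X ≫ ρ (X ⨿ Sνν X)) ≫ ρ X)
    -- delay cancellation `ρ ∘ ▷ = ρ`, where `▷ = out⁻¹ ∘ η ∘ inr`:
    (hdelay : ∀ X : C, (coprod.inr ≫ S.η (X ⨿ Sν X) ≫ tuo X) ≫ ρ X = ρ X) :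
    -- then `S`, totally guarded with iteration `f† = ρ ∘ coit f`, is a complete
    -- Elgot monad:
    -- fixpoint identity:
    (∀ (X Y : C) (f : X ⟶ S.obj (Y ⨿ X)),
      coit Y X f ≫ ρ Y = f ≫ S.bind (coprod.desc (S.η Y) (coit Y X f ≫ ρ Y))) ∧
    -- naturality:
    (∀ (X Y Z : C) (f : X ⟶ S.obj (Y ⨿ X)) (g : Y ⟶ S.obj Z),
      (coit Y X f ≫ ρ Y) ≫ S.bind g =
        coit Z X (f ≫ S.bind (coprod.desc (g ≫ S.bind (coprod.inl ≫ S.η (Z ⨿ X)))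
          (coprod.inr ≫ S.η (Z ⨿ X)))) ≫ ρ Z) ∧
    -- codiagonal:
    (∀ (X Y : C) (f : X ⟶ S.obj ((Y ⨿ X) ⨿ X)),
      coit Y X (f ≫ S.bind (coprod.desc (𝟙 (Y ⨿ X)) coprod.inr ≫ S.η (Y ⨿ X))) ≫ ρ Y =
        coit Y X (coit (Y ⨿ X) X f ≫ ρ (Y ⨿ X)) ≫ ρ Y) ∧
    -- uniformity:
    (∀ (X Y Z : C) (f : X ⟶ S.obj (Y ⨿ X)) (g : Z ⟶ S.obj (Y ⨿ Z)) (h : Z ⟶ X),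
      h ≫ f = g ≫ S.bind (coprod.map (𝟙 Y) h ≫ S.η (Y ⨿ X)) →
      h ≫ coit Y X f ≫ ρ Y = coit Y Z g ≫ ρ Y) :=
  nu_algebra_with_delay_cancellation_is_Elgot_general S Sν out tuo hot hto coit hcoit hcoit_unique
    bindν hbindν Sνν Out Tuo hOT hOutFinal ρ hρη hρbind halg₁ halg₂ hdelay
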